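/- Setup: let s ≥ 1 be an integer, let G be a finite simple graph on 8s vertices satisfying the planar bipartite edge bound and admitting no equitable 8-coloring, let x be a vertex of G, and let V_1, …, V_8 be an almost equitable coloring of G − x with small class V_1, auxiliary digraph H, accessible classes A and non-accessible classes B, chosen so that no almost equitable coloring of G − x has more accessible classes. Suppose there are exactly 5 accessible classes, x has no neighbor in any class of B, and the coloring is nice (every accessible class other than V_1 blocks at most one accessible class). Then every vertex v lying in a class V_i ∈ A \ {V_1} that has a solo neighbor in some class of B has a neighbor in every class of A \ {V_i}. (This is Lemma 4.5 of the paper.) -/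

import Mathlib

open scoped Classical

namespace Equitable

variable {V : Type*}

/-- An equitable `r`-coloring of `G`: a proper coloring with `r` colors whose
color classes pairwise differ in size by at most `1`. -/
def IsEquitableColoring [Fintype V] (G : SimpleGraph V) (r : ℕ) (c : V → Fin r) : Prop :=
  (∀ u v : V, G.Adj u v → c u ≠ c v) ∧
  ∀ i j : Fin r,
    (Finset.univ.filter fun v => c v = i).card ≤
      (Finset.univ.filter fun v => c v = j).card + 1

/-- The number of edges of `G` with both endpoints in `S`. -/
noncomputable def edgesWithin [Fintype V] (G : SimpleGraph V) (S : Finset V) : ℕ :=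
  (G.edgeFinset.filter fun e => ∀ v ∈ e, v ∈ S).card

/-- The number of edges of `G` with one endpoint in `X` and the other in `Y`. -/
noncomputable def edgesBetween [Fintype V] (G : SimpleGraph V) (X Y : Finset V) : ℕ :=
  (G.edgeFinset.filter fun e => ∃ u ∈ X, ∃ w ∈ Y, e = s(u, w)).card

/-- The semi-planar edge bounds. -/
def SemiPlanarBounds [Fintype V] (G : SimpleGraph V) : Prop :=
  (∀ S : Finset V, edgesWithin G S ≤ 3 * S.card) ∧
  ∀ X Y : Finset V, Disjoint X Y → edgesBetween G X Y ≤ 2 * (X.card + Y.card)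

/-- The planar edge bounds. -/
def PlanarBounds [Fintype V] (G : SimpleGraph V) : Prop :=
  (∀ S : Finset V, 3 ≤ S.card → edgesWithin G S ≤ 3 * S.card - 6) ∧
  ∀ X Y : Finset V, Disjoint X Y → 3 ≤ X.card + Y.card →
    edgesBetween G X Y ≤ 2 * (X.card + Y.card) - 4

/-- The semi-planar bipartite edge bound. -/
def SemiPlanarBipBound [Fintype V] (G : SimpleGraph V) : Prop :=
  ∀ X Y : Finset V, Disjoint X Y → edgesBetween G X Y ≤ 2 * (X.card + Y.card)

/-- The planar bipartite edge bound. -/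
def PlanarBipBound [Fintype V] (G : SimpleGraph V) : Prop :=
  ∀ X Y : Finset V, Disjoint X Y → 3 ≤ X.card + Y.card →
    edgesBetween G X Y ≤ 2 * (X.card + Y.card) - 4

/-- `P` is an almost equitable coloring of `G − x`: a partition of `V(G) \ {x}` into `r`
independent sets, the small class `P 0` of size `s − 1` and the other classes of size `s`. -/
def AEColoring [Fintype V] (G : SimpleGraph V) (x : V) {r : ℕ} [NeZero r] (s : ℕ)
    (P : Fin r → Finset V) : Prop :=
  (∀ i j : Fin r, i ≠ j → Disjoint (P i) (P j)) ∧
  (∀ v : V, (∃ i, v ∈ P i) ↔ v ≠ x) ∧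
  (∀ i : Fin r, ∀ u ∈ P i, ∀ w ∈ P i, ¬ G.Adj u w) ∧
  (P 0).card = s - 1 ∧
  ∀ i : Fin r, i ≠ 0 → (P i).card = s

/-- The arc relation of the auxiliary digraph `H`: an arc from class `i` to class `j`
iff `i ≠ j` and some vertex of `P i` has no `G`-neighbor in `P j` (such a vertex
is a witness of the arc and is called movable to `P j`). -/
def Arc (G : SimpleGraph V) {r : ℕ} (P : Fin r → Finset V) (i j : Fin r) : Prop :=
  i ≠ j ∧ ∃ v ∈ P i, ∀ u ∈ P j, ¬ G.Adj v u

/-- A class is accessible if the auxiliary digraph has a directed path (possibly of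
length `0`) from it to the small class `P 0`. -/
def Accessible (G : SimpleGraph V) {r : ℕ} [NeZero r] (P : Fin r → Finset V)
    (i : Fin r) : Prop :=
  Relation.ReflTransGen (Arc G P) i 0

/-- The number of accessible classes. -/
noncomputable def accCount (G : SimpleGraph V) {r : ℕ} [NeZero r]
    (P : Fin r → Finset V) : ℕ :=
  (Finset.univ.filter fun i => Accessible G P i).card

/-- No almost equitable coloring of `G − x` has more accessible classes than `P`. -/
def MaxAccessible [Fintype V] (G : SimpleGraph V) (x : V) {r : ℕ} [NeZero r] (s : ℕ)
    (P : Fin r → Finset V) : Prop :=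
  ∀ P' : Fin r → Finset V, AEColoring G x s P' → accCount G P' ≤ accCount G P

/-- Class `i` blocks class `j` if `i ≠ j` and the auxiliary digraph minus the
class `i` has no directed path from `j` to the small class `P 0`. -/
def Blocks (G : SimpleGraph V) {r : ℕ} [NeZero r] (P : Fin r → Finset V)
    (i j : Fin r) : Prop :=
  i ≠ j ∧ ¬ Relation.ReflTransGen (fun p q => Arc G P p q ∧ p ≠ i ∧ q ≠ i) j 0

/-- An accessible class is terminal if it blocks no accessible class. -/
def Terminal (G : SimpleGraph V) {r : ℕ} [NeZero r] (P : Fin r → Finset V)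
    (i : Fin r) : Prop :=
  Accessible G P i ∧ ∀ j : Fin r, Accessible G P j → ¬ Blocks G P i j

/-- `u` is a solo neighbor of `v` (where `v` lies in the accessible class `P i`):
`u` lies in a non-accessible class, is adjacent to `v`, and `v` is the unique
neighbor of `u` in `P i`.  `Q(v)` is the set of such `u`. -/
def SoloNbr (G : SimpleGraph V) {r : ℕ} [NeZero r] (P : Fin r → Finset V)
    (i : Fin r) (v u : V) : Prop :=
  (∃ k : Fin r, ¬ Accessible G P k ∧ u ∈ P k) ∧ G.Adj v u ∧
    ∀ w ∈ P i, G.Adj u w → w = v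

/-- `u ∈ Q'(v)`: `u` is a solo neighbor of `v` that is non-adjacent to some other
solo neighbor of `v`. -/
def InQ' (G : SimpleGraph V) {r : ℕ} [NeZero r] (P : Fin r → Finset V)
    (i : Fin r) (v u : V) : Prop :=
  SoloNbr G P i v u ∧ ∃ u' : V, SoloNbr G P i v u' ∧ u' ≠ u ∧ ¬ G.Adj u u'

/-- A vertex `v` of a terminal accessible class `P i` is ordinary if some other vertex of
`P i` is movable to another accessible class, or there are at most two accessible classes. -/
def Ordinary (G : SimpleGraph V) {r : ℕ} [NeZero r] (P : Fin r → Finset V)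
    (i : Fin r) (v : V) : Prop :=
  (∃ v' ∈ P i, v' ≠ v ∧
    ∃ j : Fin r, j ≠ i ∧ Accessible G P j ∧ ∀ w ∈ P j, ¬ G.Adj v' w) ∨
  accCount G P ≤ 2

/-- The strong component of the auxiliary digraph containing class `i`. -/
noncomputable def strongComp (G : SimpleGraph V) {r : ℕ} (P : Fin r → Finset V)
    (i : Fin r) : Finset (Fin r) :=
  Finset.univ.filter fun j =>
    Relation.ReflTransGen (Arc G P) i j ∧ Relation.ReflTransGen (Arc G P) j i


/-!
Suppose `v ∈ P i` has a solo neighbor `u` in a non-accessible class `P U` but no neighbor in the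
accessible class `P j`. We reach a contradiction by building an equitable coloring, each time
finishing by moving `u` into `P i` (possible once `v` has left) and `x` into `P U`.

If `j` reaches `P 0` in `H − P i`, shift one vertex along such a path, which makes `P j` the
small class, and move `v` into `P j`. So `i` blocks `j`. If some `w ∈ P j` movable to `P i` is
not adjacent to `u`, pick an arc `i → d` followed by a path `d →* 0` in `H − P i`; its witness
`y ∈ P i` differs from `v`, because by the first case `v` has a neighbor in `P d`. Shift along
`d →* 0`, move `y` into `P d` and swap `v` with `w`. Otherwise every vertex of `P j` sees `P i`
or `u`, by niceness it sees the three remaining accessible classes, and every vertex of a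
non-accessible class sees all accessible classes. So the `4s - 1` vertices of `P j` and of the
non-accessible classes other than `u` each send edges to four of the five parts formed by the
other accessible classes and `{u}`, and `4 (4s - 1)` exceeds the bound `2 (8s - 1) - 4`.
-/

open Relation

theorem _root_.Relation.ReflTransGen.exists_head_avoiding {α : Type*} {r : α → α → Prop}
    {a b : α} (h : ReflTransGen r a b) (hab : a ≠ b) :
    ∃ c, r a c ∧ c ≠ a ∧ ReflTransGen (fun x y => r x y ∧ x ≠ a ∧ y ≠ a) c b := by
  induction h with
  | refl => exact absurd rfl hab
  | @tail b' b _ hb'b ih =>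
    by_cases hab' : a = b'
    · subst hab'
      exact ⟨b, hb'b, Ne.symm hab, .refl⟩
    · obtain ⟨c, hac, hca, hcb'⟩ := ih hab'
      exact ⟨c, hac, hca, hcb'.tail ⟨hb'b, Ne.symm hab', Ne.symm hab⟩⟩

section Moves

variable {r : ℕ}

noncomputable def moveTo (Q : Fin r → Finset V) (z : V) (b : Fin r) (k : Fin r) : Finset V :=
  if k = b then insert z (Q k) else (Q k).erase z

variable {G : SimpleGraph V} {Q : Fin r → Finset V} {z y : V} {b k : Fin r}

@[simp]
theorem moveTo_self : moveTo Q z b b = insert z (Q b) := if_pos rfl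

theorem moveTo_of_ne (hk : k ≠ b) : moveTo Q z b k = (Q k).erase z := if_neg hk

theorem mem_moveTo : y ∈ moveTo Q z b k ↔ (k = b ∧ y = z) ∨ (y ≠ z ∧ y ∈ Q k) := by
  unfold moveTo
  split_ifs with hk
  · simp only [hk, Finset.mem_insert, true_and]
    tauto
  · simp only [hk, Finset.mem_erase, false_and, false_or]

theorem mem_moveTo_of_mem (hyz : y ≠ z) (hy : y ∈ Q k) : y ∈ moveTo Q z b k :=
  mem_moveTo.mpr (Or.inr ⟨hyz, hy⟩)

theorem moveTo_subset (hk : k ≠ b) : moveTo Q z b k ⊆ Q k := by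
  rw [moveTo_of_ne hk]
  exact Finset.erase_subset _ _

theorem moveTo_eq_of_notMem (hk : k ≠ b) (hz : z ∉ Q k) : moveTo Q z b k = Q k := by
  rw [moveTo_of_ne hk, Finset.erase_eq_of_notMem hz]

theorem pairwise_disjoint_moveTo (hQ : ∀ i j, i ≠ j → Disjoint (Q i) (Q j)) :
    ∀ i j, i ≠ j → Disjoint (moveTo Q z b i) (moveTo Q z b j) := by
  intro i j hij
  rw [Finset.disjoint_left]
  intro y hyi hyj
  rw [mem_moveTo] at hyi hyj
  rcases hyi with ⟨rfl, rfl⟩ | ⟨hyz, hyi⟩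
  · exact hyj.elim (fun h => hij h.1.symm) fun h => h.1 rfl
  · rcases hyj with ⟨-, rfl⟩ | ⟨-, hyj⟩
    · exact hyz rfl
    · exact Finset.disjoint_left.mp (hQ i j hij) hyi hyj

theorem exists_mem_moveTo_iff : (∃ k, y ∈ moveTo Q z b k) ↔ y = z ∨ ∃ k, y ∈ Q k := by
  constructor
  · rintro ⟨k, hy⟩
    rcases mem_moveTo.mp hy with ⟨-, rfl⟩ | ⟨-, hy⟩
    exacts [Or.inl rfl, Or.inr ⟨k, hy⟩]
  · rintro (rfl | ⟨k, hy⟩)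
    · exact ⟨b, by simp⟩
    · by_cases hyz : y = z
      · exact ⟨b, mem_moveTo.mpr (Or.inl ⟨rfl, hyz⟩)⟩
      · exact ⟨k, mem_moveTo_of_mem hyz hy⟩

theorem independent_moveTo (hQ : ∀ k, ∀ p ∈ Q k, ∀ q ∈ Q k, ¬ G.Adj p q)
    (hz : ∀ y ∈ Q b, ¬ G.Adj z y) :
    ∀ k, ∀ p ∈ moveTo Q z b k, ∀ q ∈ moveTo Q z b k, ¬ G.Adj p q := by
  intro k p hp q hq hpq
  rw [mem_moveTo] at hp hq
  rcases hp with ⟨rfl, rfl⟩ | ⟨-, hp⟩ <;> rcases hq with ⟨hkb, rfl⟩ | ⟨-, hq⟩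
  · exact G.loopless.irrefl _ hpq
  · exact hz q hq hpq
  · exact hz p (hkb ▸ hp) hpq.symm
  · exact hQ k p hp q hq hpq

end Moves

section AlmostEquitable

variable {r : ℕ}

/-- `AEColoring` with an arbitrary small class `d` in place of `0`. -/
structure IsAlmostEquitable (G : SimpleGraph V) (x : V) (s : ℕ) (Q : Fin r → Finset V)
    (d : Fin r) : Prop where
  disjoint : ∀ i j, i ≠ j → Disjoint (Q i) (Q j)
  exists_mem_iff : ∀ y, (∃ k, y ∈ Q k) ↔ y ≠ x
  independent : ∀ k, ∀ p ∈ Q k, ∀ q ∈ Q k, ¬ G.Adj p q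
  card_small : (Q d).card = s - 1
  card_of_ne : ∀ k, k ≠ d → (Q k).card = s

variable {G : SimpleGraph V} {x z : V} {s : ℕ} {Q : Fin r → Finset V} {d : Fin r}

theorem AEColoring.isAlmostEquitable [Fintype V] [NeZero r] (hQ : AEColoring G x s Q) :
    IsAlmostEquitable G x s Q 0 :=
  ⟨hQ.1, hQ.2.1, hQ.2.2.1, hQ.2.2.2.1, hQ.2.2.2.2⟩

namespace IsAlmostEquitable

variable (hQ : IsAlmostEquitable G x s Q d)
include hQ

theorem notMem_of_ne {y : V} {a k : Fin r} (hy : y ∈ Q a) (hk : k ≠ a) : y ∉ Q k :=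
  fun hyk => Finset.disjoint_left.mp (hQ.disjoint k a hk) hyk hy

theorem ne_of_mem {y : V} {k : Fin r} (hy : y ∈ Q k) : y ≠ x :=
  (hQ.exists_mem_iff y).mp ⟨k, hy⟩

theorem move {a : Fin r} (had : a ≠ d) (hz : z ∈ Q a) (hzd : ∀ y ∈ Q d, ¬ G.Adj z y) :
    IsAlmostEquitable G x s (moveTo Q z d) a where
  disjoint := pairwise_disjoint_moveTo hQ.disjoint
  exists_mem_iff y := by
    rw [exists_mem_moveTo_iff, hQ.exists_mem_iff]
    constructor
    · rintro (rfl | hy)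
      exacts [hQ.ne_of_mem hz, hy]
    · exact Or.inr
  independent := independent_moveTo hQ.independent hzd
  card_small := by
    rw [moveTo_of_ne had, Finset.card_erase_of_mem hz, hQ.card_of_ne a had]
  card_of_ne k hka := by
    by_cases hkd : k = d
    · subst hkd
      have hza := Finset.card_pos.mpr ⟨z, hz⟩
      rw [hQ.card_of_ne a had] at hza
      rw [moveTo_self, Finset.card_insert_of_notMem (hQ.notMem_of_ne hz (Ne.symm had)),
        hQ.card_small]
      omega
    · rw [moveTo_eq_of_notMem hkd (hQ.notMem_of_ne hz hka), hQ.card_of_ne k hkd]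

theorem card_biUnion (hs : 1 ≤ s) (T : Finset (Fin r)) :
    (T.biUnion Q).card + (if d ∈ T then 1 else 0) = T.card * s := by
  rw [Finset.card_biUnion fun i _ j _ hij => hQ.disjoint i j hij,
    ← Finset.sum_ite_eq T d fun _ => 1, ← Finset.sum_add_distrib, ← smul_eq_mul,
    ← Finset.sum_const]
  refine Finset.sum_congr rfl fun k _ => ?_
  by_cases hkd : d = k
  · subst hkd
    rw [if_pos rfl, hQ.card_small]
    omega
  · rw [if_neg hkd, hQ.card_of_ne k (Ne.symm hkd), add_zero]

end IsAlmostEquitable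

theorem exists_isEquitableColoring_of_partition [Fintype V] (Q : Fin r → Finset V)
    (hdisj : ∀ i j, i ≠ j → Disjoint (Q i) (Q j)) (hcover : ∀ y, ∃ k, y ∈ Q k)
    (hind : ∀ k, ∀ p ∈ Q k, ∀ q ∈ Q k, ¬ G.Adj p q)
    (hcard : ∀ i j, (Q i).card ≤ (Q j).card + 1) :
    ∃ c : V → Fin r, IsEquitableColoring G r c := by
  choose c hc using hcover
  have hclass : ∀ k, (Finset.univ.filter fun y => c y = k) = Q k := by
    intro k
    ext y
    simp only [Finset.mem_filter, Finset.mem_univ, true_and]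
    refine ⟨fun h => h ▸ hc y, fun hy => ?_⟩
    by_contra hne
    exact Finset.disjoint_left.mp (hdisj _ _ hne) (hc y) hy
  refine ⟨c, fun p q hpq hc' => hind (c p) p (hc p) q (hc' ▸ hc q) hpq, fun i j => ?_⟩
  rw [hclass, hclass]
  exact hcard i j

theorem IsAlmostEquitable.exists_isEquitableColoring [Fintype V]
    (hQ : IsAlmostEquitable G x s Q d) (hx : ∀ y ∈ Q d, ¬ G.Adj x y) :
    ∃ c : V → Fin r, IsEquitableColoring G r c := by
  have hxQ : ∀ k, x ∉ Q k := fun k hk => hQ.ne_of_mem hk rfl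
  have hcard : ∀ k, (moveTo Q x d k).card = s ∨ (moveTo Q x d k).card = s - 1 + 1 := by
    intro k
    by_cases hkd : k = d
    · subst hkd
      rw [moveTo_self, Finset.card_insert_of_notMem (hxQ k), hQ.card_small]
      exact Or.inr rfl
    · rw [moveTo_eq_of_notMem hkd (hxQ k), hQ.card_of_ne k hkd]
      exact Or.inl rfl
  refine exists_isEquitableColoring_of_partition (moveTo Q x d)
    (pairwise_disjoint_moveTo hQ.disjoint) (fun y => ?_) (independent_moveTo hQ.independent hx)
    fun i j => by rcases hcard i with h | h <;> rcases hcard j with h' | h' <;> omega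
  rw [exists_mem_moveTo_iff, hQ.exists_mem_iff]
  exact eq_or_ne y x

end AlmostEquitable

section Shift

variable {r : ℕ} {G : SimpleGraph V} {x : V} {s : ℕ} {P : Fin r → Finset V} {d : Fin r}

/-- Shift one vertex along each arc of a path from `W` to the small class `d`. The path is made
simple by deleting `W` from the digraph before recursing, which shrinks the set of classes
that reach `d`. -/
theorem IsAlmostEquitable.exists_shift (hP : IsAlmostEquitable G x s P d)
    {R : Fin r → Fin r → Prop} (hR : ∀ a b, R a b → Arc G P a b) {W : Fin r}
    (hW : ReflTransGen R W d) :
    ∃ Q, IsAlmostEquitable G x s Q W ∧ Q W ⊆ P W ∧ ∀ k, ¬ ReflTransGen R k d → Q k = P k := by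
  induction hn : (Finset.univ.filter fun k => ReflTransGen R k d).card
    using Nat.strong_induction_on generalizing R W with
  | _ n ih =>
    by_cases hWd : W = d
    · subst hWd
      exact ⟨P, hP, subset_rfl, fun _ _ => rfl⟩
    obtain ⟨c, hWc, hcW, hc⟩ := hW.exists_head_avoiding hWd
    set R' : Fin r → Fin r → Prop := fun a b => R a b ∧ a ≠ W ∧ b ≠ W
    have hR'R : ∀ k, ReflTransGen R' k d → ReflTransGen R k d :=
      fun k => ReflTransGen.mono (fun _ _ h => h.1) k d
    have hW' : ¬ ReflTransGen R' W d := fun h => by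
      rcases h.cases_head with h | ⟨_, h, _⟩
      exacts [hWd h, h.2.1 rfl]
    have hlt : (Finset.univ.filter fun k => ReflTransGen R' k d).card < n := by
      rw [← hn]
      refine Finset.card_lt_card ((Finset.ssubset_iff_of_subset ?_).mpr ⟨W, ?_, ?_⟩)
      · exact Finset.monotone_filter_right _ fun k _ => hR'R k
      · simpa using hW
      · simpa using hW'
    obtain ⟨Q, hQ, hQc, hQP⟩ := ih _ hlt (fun a b h => hR a b h.1) hc rfl
    obtain ⟨-, z, hz, hzc⟩ := hR W c hWc
    have hQW : Q W = P W := hQP W hW'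
    refine ⟨moveTo Q z c, hQ.move (Ne.symm hcW) (hQW ▸ hz) fun y hy => hzc y (hQc hy), ?_, ?_⟩
    · rw [← hQW]
      exact moveTo_subset (Ne.symm hcW)
    · intro k hk
      have hkW : k ≠ W := fun h => hk (h ▸ hW)
      have hkc : k ≠ c := fun h => hk (h ▸ hR'R c hc)
      have hQk : Q k = P k := hQP k fun h => hk (hR'R k h)
      rw [moveTo_eq_of_notMem hkc (hQk ▸ hP.notMem_of_ne hz hkW), hQk]

end Shift

section Solo

variable {r : ℕ} {G : SimpleGraph V} {x : V} {s : ℕ} {P : Fin r → Finset V}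

theorem exists_adj_of_not_arc {a b : Fin r} (hab : a ≠ b) (h : ¬ Arc G P a b) {y : V}
    (hy : y ∈ P a) : ∃ w ∈ P b, G.Adj y w := by
  by_contra! hy'
  exact h ⟨hab, y, hy, hy'⟩

variable [NeZero r]

/-- The arcs of `H − P i`, as in `Blocks`. -/
def ArcAvoiding (G : SimpleGraph V) (P : Fin r → Finset V) (i : Fin r) (p q : Fin r) : Prop :=
  Arc G P p q ∧ p ≠ i ∧ q ≠ i

theorem not_reflTransGen_arcAvoiding_self {i : Fin r} (hi0 : i ≠ 0) :
    ¬ ReflTransGen (ArcAvoiding G P i) i 0 := fun h => by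
  rcases h.cases_head with h | ⟨_, h, _⟩
  exacts [hi0 h, h.2.1 rfl]

theorem accessible_of_reflTransGen_arcAvoiding {i k : Fin r}
    (h : ReflTransGen (ArcAvoiding G P i) k 0) : Accessible G P k :=
  ReflTransGen.mono (fun _ _ h => h.1) k 0 h

theorem exists_adj_of_not_accessible {k l : Fin r} (hk : ¬ Accessible G P k)
    (hl : Accessible G P l) {a : V} (ha : a ∈ P k) : ∃ b ∈ P l, G.Adj a b :=
  exists_adj_of_not_arc (fun h : k = l => hk (h ▸ hl)) (fun h => hk (hl.head h)) ha

theorem exists_adj_of_blocks {i j l : Fin r} (hij : Blocks G P i j)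
    (hl : ReflTransGen (ArcAvoiding G P i) l 0) (hli : l ≠ i) {a : V} (ha : a ∈ P j) :
    ∃ b ∈ P l, G.Adj a b :=
  exists_adj_of_not_arc (fun h : j = l => hij.2 (h ▸ hl))
    (fun h => hij.2 (ReflTransGen.head ⟨h, Ne.symm hij.1, hli⟩ hl)) ha

theorem reflTransGen_arcAvoiding_of_nice {i j k : Fin r}
    (hnice : (Finset.univ.filter fun l => Accessible G P l ∧ Blocks G P i l).card ≤ 1)
    (hj : Accessible G P j) (hij : Blocks G P i j) (hk : Accessible G P k) (hki : k ≠ i)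
    (hkj : k ≠ j) : ReflTransGen (ArcAvoiding G P i) k 0 := by
  by_contra h
  exact hkj (Finset.card_le_one.mp hnice k (by simpa using ⟨hk, Ne.symm hki, h⟩) j
    (by simpa using ⟨hj, hij⟩))

variable [Fintype V] {i : Fin r} {v u : V}

theorem exists_isEquitableColoring_of_reach_avoiding (hP : IsAlmostEquitable G x s P 0)
    (hx : ∀ k, ¬ Accessible G P k → ∀ y ∈ P k, ¬ G.Adj x y) (hi0 : i ≠ 0) (hv : v ∈ P i)
    (hu : SoloNbr G P i v u) {W : Fin r} (hW : ReflTransGen (ArcAvoiding G P i) W 0)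
    (hvW : ∀ y ∈ P W, ¬ G.Adj v y) :
    ∃ c : V → Fin r, IsEquitableColoring G r c := by
  obtain ⟨⟨U, hU, huU⟩, hvu, hsolo⟩ := hu
  have hUi : U ≠ i := fun h => hP.independent i v hv u (h ▸ huU) hvu
  have hWi : W ≠ i := fun h => not_reflTransGen_arcAvoiding_self hi0 (h ▸ hW)
  have hUW : U ≠ W := fun h => hU (accessible_of_reflTransGen_arcAvoiding (h ▸ hW))
  obtain ⟨Q, hQ, hQW, hQP⟩ := hP.exists_shift (fun _ _ h => h.1) hW
  have hQi : Q i = P i := hQP i (not_reflTransGen_arcAvoiding_self hi0)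
  have hQU : Q U = P U := hQP U fun h => hU (accessible_of_reflTransGen_arcAvoiding h)
  have h₁ := hQ.move (Ne.symm hWi) (hQi ▸ hv) fun y hy => hvW y (hQW hy)
  have h₂ := h₁.move hUi (mem_moveTo_of_mem hvu.ne' (hQU ▸ huU)) fun y hy huy => by
    obtain ⟨hyv, hy⟩ := (mem_moveTo.mp hy).resolve_left fun h => hWi h.1.symm
    exact hyv (hsolo y (hQi ▸ hy) huy)
  exact h₂.exists_isEquitableColoring fun y hy =>
    hx U hU y (hQU ▸ moveTo_subset hUW (moveTo_subset hUi hy))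

theorem exists_isEquitableColoring_of_blocks (hP : IsAlmostEquitable G x s P 0)
    (hx : ∀ k, ¬ Accessible G P k → ∀ y ∈ P k, ¬ G.Adj x y) (hi0 : i ≠ 0) (hv : v ∈ P i)
    (hu : SoloNbr G P i v u) {j d : Fin r} {w y : V} (hij : Blocks G P i j)
    (hvj : ∀ b ∈ P j, ¬ G.Adj v b) (hw : w ∈ P j) (hwi : ∀ b ∈ P i, ¬ G.Adj w b)
    (huw : ¬ G.Adj u w) (hd : ReflTransGen (ArcAvoiding G P i) d 0)
    (hy : y ∈ P i) (hyv : y ≠ v) (hyd : ∀ b ∈ P d, ¬ G.Adj y b) :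
    ∃ c : V → Fin r, IsEquitableColoring G r c := by
  obtain ⟨⟨U, hU, huU⟩, hvu, hsolo⟩ := hu
  obtain ⟨hij, hj⟩ := hij
  have hUi : U ≠ i := fun h => hP.independent i v hv u (h ▸ huU) hvu
  have hUj : U ≠ j := fun h => hvj u (h ▸ huU) hvu
  have hdi : d ≠ i := fun h => not_reflTransGen_arcAvoiding_self hi0 (h ▸ hd)
  have hdj : d ≠ j := fun h => hj (h ▸ hd)
  have hUd : U ≠ d := fun h => hU (accessible_of_reflTransGen_arcAvoiding (h ▸ hd))
  have huw' : u ≠ w := fun h => hP.notMem_of_ne hw hUj (h ▸ huU)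
  have huy : u ≠ y := fun h => hP.notMem_of_ne hy hUi (h ▸ huU)
  have hwy : w ≠ y := fun h => hP.notMem_of_ne hy (Ne.symm hij) (h ▸ hw)
  have hvw : v ≠ w := fun h => hP.notMem_of_ne hw hij (h ▸ hv)
  obtain ⟨Q, hQ, hQd, hQP⟩ := hP.exists_shift (fun _ _ h => h.1) hd
  have hQi : Q i = P i := hQP i (not_reflTransGen_arcAvoiding_self hi0)
  have hQj : Q j = P j := hQP j hj
  have hQU : Q U = P U := hQP U fun h => hU (accessible_of_reflTransGen_arcAvoiding h)
  have h₁ := hQ.move (Ne.symm hdi) (hQi ▸ hy) fun b hb => hyd b (hQd hb)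
  have h₂ := h₁.move (Ne.symm hij) (mem_moveTo_of_mem hwy (hQj ▸ hw)) fun b hb =>
    hwi b (hQi ▸ moveTo_subset (Ne.symm hdi) hb)
  have h₃ := h₂.move hij (mem_moveTo_of_mem hvw (mem_moveTo_of_mem (Ne.symm hyv) (hQi ▸ hv)))
    fun b hb => hvj b (hQj ▸ moveTo_subset (Ne.symm hdj) (moveTo_subset (Ne.symm hij) hb))
  have h₄ := h₃.move hUi (mem_moveTo_of_mem hvu.ne' (mem_moveTo_of_mem huw'
      (mem_moveTo_of_mem huy (hQU ▸ huU)))) fun b hb hub => by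
    obtain ⟨hbv, hb⟩ := (mem_moveTo.mp hb).resolve_left fun h => hij h.1
    rcases mem_moveTo.mp hb with ⟨-, rfl⟩ | ⟨-, hb⟩
    · exact huw hub
    · exact hbv (hsolo b (hQi ▸ moveTo_subset (Ne.symm hdi) hb) hub)
  exact h₄.exists_isEquitableColoring fun b hb => hx U hU b <| hQU ▸
    moveTo_subset hUd (moveTo_subset hUi (moveTo_subset hUj (moveTo_subset hUi hb)))

end Solo

section Counting

variable {G : SimpleGraph V} {X Y : Finset V}

theorem sum_card_filter_adj_le_edgesBetween [Fintype V] (hXY : Disjoint X Y) :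
    ∑ a ∈ X, (Y.filter (G.Adj a)).card ≤ edgesBetween G X Y := by
  rw [← Finset.card_sigma]
  refine Finset.card_le_card_of_injOn (fun p => s(p.1, p.2)) ?_ ?_
  · rintro ⟨a, b⟩ hab
    simp only [Finset.coe_sigma, Set.mem_sigma_iff, Finset.mem_coe, Finset.mem_filter] at hab
    simp only [Finset.coe_filter, Set.mem_ofPred_eq, SimpleGraph.mem_edgeFinset,
      SimpleGraph.mem_edgeSet]
    exact ⟨hab.2.2, a, hab.1, b, hab.2.1, rfl⟩
  · rintro ⟨a, b⟩ hab ⟨a', b'⟩ hab' h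
    simp only [Finset.coe_sigma, Set.mem_sigma_iff, Finset.mem_coe, Finset.mem_filter] at hab hab'
    rcases Sym2.eq_iff.mp h with ⟨rfl, rfl⟩ | ⟨rfl, -⟩
    · rfl
    · exact absurd hab'.2.1 (Finset.disjoint_left.mp hXY hab.1)

theorem card_filter_exists_adj_le {ι : Type*} [Fintype ι] (parts : ι → Finset V)
    (hparts : ∀ p, parts p ⊆ Y) (hdisj : Pairwise fun p q => Disjoint (parts p) (parts q))
    (a : V) :
    (Finset.univ.filter fun p => ∃ b ∈ parts p, G.Adj a b).card ≤
      (Y.filter (G.Adj a)).card := by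
  calc _ ≤ ((Finset.univ.filter fun p => ∃ b ∈ parts p, G.Adj a b).biUnion
          fun p => (parts p).filter (G.Adj a)).card := by
        refine Finset.card_le_card_biUnion
          (fun p _ q _ hpq => (hdisj hpq).mono (Finset.filter_subset _ _)
            (Finset.filter_subset _ _)) fun p hp => ?_
        obtain ⟨b, hb, hab⟩ := (Finset.mem_filter.mp hp).2
        exact ⟨b, Finset.mem_filter.mpr ⟨hb, hab⟩⟩
    _ ≤ _ := Finset.card_le_card <| Finset.biUnion_subset.mpr fun p _ =>
        Finset.filter_subset_filter _ (hparts p)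

theorem mul_card_le_edgesBetween [Fintype V] {ι : Type*} [Fintype ι] (hXY : Disjoint X Y)
    (parts : ι → Finset V) (hparts : ∀ p, parts p ⊆ Y)
    (hdisj : Pairwise fun p q => Disjoint (parts p) (parts q)) {m : ℕ}
    (hm : ∀ a ∈ X, m ≤ (Finset.univ.filter fun p => ∃ b ∈ parts p, G.Adj a b).card) :
    m * X.card ≤ edgesBetween G X Y :=
  calc m * X.card = ∑ _a ∈ X, m := by rw [Finset.sum_const, smul_eq_mul, mul_comm]
    _ ≤ ∑ a ∈ X, (Finset.univ.filter fun p => ∃ b ∈ parts p, G.Adj a b).card :=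
        Finset.sum_le_sum hm
    _ ≤ ∑ a ∈ X, (Y.filter (G.Adj a)).card :=
        Finset.sum_le_sum fun a _ => card_filter_exists_adj_le parts hparts hdisj a
    _ ≤ edgesBetween G X Y := sum_card_filter_adj_le_edgesBetween hXY

end Counting

/-- `Y` consists of the four classes in `T` and `u`, `X` of the remaining vertices of `V − x`;
the parts of `Y` seen from `X` are the classes `P l` filtered by `l ∈ T ∨ b = u`. -/
theorem IsAlmostEquitable.false_of_four_le_card_adj [Fintype V] {G : SimpleGraph V} {x : V}
    {s : ℕ} {P : Fin 8 → Finset V} (hP : IsAlmostEquitable G x s P 0) (hs : 1 ≤ s)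
    (hbip : PlanarBipBound G) {T : Finset (Fin 8)} (hT : T.card = 4) (h0 : 0 ∈ T)
    {U : Fin 8} (hUT : U ∉ T) {u : V} (hu : u ∈ P U)
    (hadj : ∀ k ∉ T, ∀ a ∈ P k, a ≠ u → 4 ≤ (Finset.univ.filter fun l =>
      ∃ b ∈ (P l).filter (fun b => l ∈ T ∨ b = u), G.Adj a b).card) : False := by
  have huT : u ∉ T.biUnion P := by
    simp only [Finset.mem_biUnion, not_exists, not_and]
    exact fun k hk => hP.notMem_of_ne hu fun h => hUT (h ▸ hk)
  have huX : u ∈ Tᶜ.biUnion P := Finset.mem_biUnion.mpr ⟨U, Finset.mem_compl.mpr hUT, hu⟩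
  set X := (Tᶜ.biUnion P).erase u
  set Y := insert u (T.biUnion P)
  have hX : X.card = 4 * s - 1 := by
    have := hP.card_biUnion hs Tᶜ
    rw [if_neg (Finset.notMem_compl.mpr h0), Finset.card_compl, hT, Fintype.card_fin] at this
    rw [Finset.card_erase_of_mem huX]
    omega
  have hY : Y.card = 4 * s := by
    have := hP.card_biUnion hs T
    rw [if_pos h0, hT] at this
    rw [Finset.card_insert_of_notMem huT]
    omega
  have hXY : Disjoint X Y := by
    simp only [X, Y, Finset.disjoint_left, Finset.mem_erase, Finset.mem_insert,
      Finset.mem_biUnion, Finset.mem_compl]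
    rintro a ⟨hau, k, hk, ha⟩ (rfl | ⟨l, hl, hal⟩)
    · exact hau rfl
    · exact hP.notMem_of_ne ha (fun h => hk (h ▸ hl)) hal
  have hcount := mul_card_le_edgesBetween hXY (fun l => (P l).filter fun b => l ∈ T ∨ b = u)
    (fun l b hb => by
      simp only [Finset.mem_filter] at hb
      simp only [Y, Finset.mem_insert, Finset.mem_biUnion]
      rcases hb.2 with hl | rfl
      exacts [Or.inr ⟨l, hl, hb.1⟩, Or.inl rfl])
    (fun k l hkl => (hP.disjoint k l hkl).mono (Finset.filter_subset _ _)
      (Finset.filter_subset _ _))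
    (m := 4) fun a ha => by
      simp only [X, Finset.mem_erase, Finset.mem_biUnion, Finset.mem_compl] at ha
      obtain ⟨hau, k, hk, hak⟩ := ha
      exact hadj k hk a hak hau
  have hbound := hbip X Y hXY (by omega)
  omega

theorem false_of_forall_movable_adj [Fintype V] {G : SimpleGraph V} {x : V} {s : ℕ}
    {P : Fin 8 → Finset V} (hP : IsAlmostEquitable G x s P 0) (hs : 1 ≤ s)
    (hbip : PlanarBipBound G) (h5 : accCount G P = 5) {i j U : Fin 8} {u : V}
    (hi : Accessible G P i) (hj : Accessible G P j) (hU : ¬ Accessible G P U) (hu : u ∈ P U)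
    (hij : Blocks G P i j)
    (hreach : ∀ k, Accessible G P k → k ≠ i → k ≠ j → ReflTransGen (ArcAvoiding G P i) k 0)
    (hmov : ∀ w ∈ P j, (∀ b ∈ P i, ¬ G.Adj w b) → G.Adj u w) : False := by
  set T := (Finset.univ.filter (Accessible G P)).erase j
  have hmemT : ∀ l, l ∈ T ↔ l ≠ j ∧ Accessible G P l := by simp [T]
  have hUT : U ∉ T := fun h => hU ((hmemT U).mp h).2
  have hT : T.card = 4 := by
    rw [Finset.card_erase_of_mem (by simpa using hj)]
    exact congrArg (· - 1) h5
  have hiT : i ∈ T := (hmemT i).mpr ⟨hij.1, hi⟩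
  refine hP.false_of_four_le_card_adj hs hbip hT
    ((hmemT 0).mpr ⟨fun h => hij.2 (h ▸ .refl), .refl⟩) hUT hu fun k hk a ha hau => ?_
  have hsub : ∀ S : Finset (Fin 8), S.card = 4 →
      (∀ l ∈ S, ∃ b ∈ P l, (l ∈ T ∨ b = u) ∧ G.Adj a b) →
      4 ≤ (Finset.univ.filter fun l =>
        ∃ b ∈ (P l).filter (fun b => l ∈ T ∨ b = u), G.Adj a b).card := by
    intro S hS hSadj
    rw [← hS]
    refine Finset.card_le_card fun l hl => ?_
    simpa [and_assoc] using hSadj l hl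
  by_cases hkj : k = j
  · subst hkj
    have hadjT : ∀ l ∈ T, l ≠ i → ∃ b ∈ P l, (l ∈ T ∨ b = u) ∧ G.Adj a b := fun l hl hli => by
      obtain ⟨b, hb, hab⟩ := exists_adj_of_blocks hij
        (hreach l ((hmemT l).mp hl).2 hli ((hmemT l).mp hl).1) hli ha
      exact ⟨b, hb, Or.inl hl, hab⟩
    by_cases hai : ∃ b ∈ P i, G.Adj a b
    · refine hsub T hT fun l hl => ?_
      by_cases hli : l = i
      · obtain ⟨b, hb, hab⟩ := hai
        exact ⟨b, hli ▸ hb, Or.inl hl, hab⟩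
      · exact hadjT l hl hli
    · refine hsub (insert U (T.erase i)) ?_ fun l hl => ?_
      · rw [Finset.card_insert_of_notMem fun h => hUT (Finset.mem_of_mem_erase h),
          Finset.card_erase_of_mem hiT, hT]
      · rcases Finset.mem_insert.mp hl with rfl | hl
        · exact ⟨u, hu, Or.inr rfl, (hmov a ha fun b hb hab => hai ⟨b, hb, hab⟩).symm⟩
        · exact hadjT l (Finset.mem_of_mem_erase hl) (Finset.ne_of_mem_erase hl)
  · refine hsub T hT fun l hl => ?_
    obtain ⟨b, hb, hab⟩ := exists_adj_of_not_accessible (fun h => hk ((hmemT k).mpr ⟨hkj, h⟩))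
      ((hmemT l).mp hl).2 ha
    exact ⟨b, hb, Or.inl hl, hab⟩

theorem nice_solo_vertex_neighbor_everywhere_general (V : Type*) [Fintype V]
    (G : SimpleGraph V) (x : V) (s : ℕ) (hs : 1 ≤ s)
    (hbip : PlanarBipBound G)
    (hno : ¬ ∃ c : V → Fin 8, IsEquitableColoring G 8 c)
    (P : Fin 8 → Finset V) (hP : AEColoring G x s P)
    (h5 : accCount G P = 5)
    (hx : ∀ k : Fin 8, ¬ Accessible G P k → ∀ u ∈ P k, ¬ G.Adj x u)
    (hnice : ∀ i : Fin 8, Accessible G P i → i ≠ 0 →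
      (Finset.univ.filter fun j : Fin 8 =>
        Accessible G P j ∧ Blocks G P i j).card ≤ 1) :
    ∀ i : Fin 8, Accessible G P i → i ≠ 0 → ∀ v ∈ P i,
      (∃ u : V, SoloNbr G P i v u) →
      ∀ j : Fin 8, Accessible G P j → j ≠ i → ∃ w ∈ P j, G.Adj v w := by
  intro i hi hi0 v hv ⟨u, hu⟩ j hj hji
  by_contra! hvj
  replace hP := hP.isAlmostEquitable
  have hmissed : ∀ {k}, ReflTransGen (ArcAvoiding G P i) k 0 → ∃ b ∈ P k, G.Adj v b :=
    fun hk => by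
      by_contra! hvk
      exact hno (exists_isEquitableColoring_of_reach_avoiding hP hx hi0 hv hu hk hvk)
  have hij : Blocks G P i j := ⟨Ne.symm hji, fun h => by
    obtain ⟨b, hb, hvb⟩ := hmissed h
    exact hvj b hb hvb⟩
  by_cases hmov : ∀ w ∈ P j, (∀ b ∈ P i, ¬ G.Adj w b) → G.Adj u w
  · obtain ⟨⟨U, hU, huU⟩, -, -⟩ := hu
    exact false_of_forall_movable_adj hP hs hbip h5 hi hj hU huU hij
      (fun k => reflTransGen_arcAvoiding_of_nice (hnice i hi hi0) hj hij) hmov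
  obtain ⟨w, hw, hwi, huw⟩ : ∃ w ∈ P j, (∀ b ∈ P i, ¬ G.Adj w b) ∧ ¬ G.Adj u w := by
    simpa using hmov
  obtain ⟨d, ⟨-, y, hy, hyd⟩, -, hd⟩ := ReflTransGen.exists_head_avoiding hi hi0
  obtain ⟨b, hb, hvb⟩ := hmissed hd
  exact hno (exists_isEquitableColoring_of_blocks hP hx hi0 hv hu hij hvj hw hwi huw hd hy
    (fun h => hyd b hb (h ▸ hvb)) hyd)

/-- **Lemma 4.5.** Let `G` be a graph on `8s` vertices satisfying the planar bipartite
edge bound with no equitable `8`-coloring, and let `P` be an almost equitable coloring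
of `G − x` maximizing the number of accessible classes, with exactly `5` accessible
classes, such that `x` has no neighbor in any non-accessible class and the coloring is
nice (every accessible class other than the small class `P 0` blocks at most one
accessible class).  Then every vertex `v` of an accessible class `P i ≠ P 0` that has a
solo neighbor in a non-accessible class has a neighbor in every other accessible
class. -/
theorem nice_solo_vertex_neighbor_everywhere (V : Type*) [Fintype V]
    (G : SimpleGraph V) (x : V) (s : ℕ) (hs : 1 ≤ s)
    (hcard : Fintype.card V = 8 * s) (hbip : PlanarBipBound G)
    (hno : ¬ ∃ c : V → Fin 8, IsEquitableColoring G 8 c)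
    (P : Fin 8 → Finset V) (hP : AEColoring G x s P)
    (hmax : MaxAccessible G x s P)
    (h5 : accCount G P = 5)
    (hx : ∀ k : Fin 8, ¬ Accessible G P k → ∀ u ∈ P k, ¬ G.Adj x u)
    (hnice : ∀ i : Fin 8, Accessible G P i → i ≠ 0 →
      (Finset.univ.filter fun j : Fin 8 =>
        Accessible G P j ∧ Blocks G P i j).card ≤ 1) :
    ∀ i : Fin 8, Accessible G P i → i ≠ 0 → ∀ v ∈ P i,
      (∃ u : V, SoloNbr G P i v u) →
      ∀ j : Fin 8, Accessible G P j → j ≠ i → ∃ w ∈ P j, G.Adj v w :=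
  nice_solo_vertex_neighbor_everywhere_general V G x s hs hbip hno P hP h5 hx hnice

end Equitable
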